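/- Let B' be a Boolean algebra and let S be a Boolean subalgebra of B'. Then every bounded lattice homomorphism f from S to the two-element Boolean algebra Bool extends to a bounded lattice homomorphism F from B' to Bool, i.e., F(x) = f(x) for all x ∈ S. -/
import Mathlib

open Classical in
/-- **Ultrafilter extension (key step of Theorem 5).** Let `B'` be a Boolean algebra and
let `s` be (the carrier of) a Boolean subalgebra of `B'`: a subset containing `⊥` and `⊤`
and closed under joins, meets, and complements. Then every bounded lattice homomorphism
`f` from the subalgebra `s` to the two-element Boolean algebra `Bool` extends to a bounded
lattice homomorphism `F : B' → Bool`, i.e. `F x = f x` for all `x ∈ s`. Via Stone duality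
this says every point of `S(B_p)` extends to a point of `S(B_{p+1})`. -/
theorem boundedLatticeHom_to_bool_extends {B' : Type*} [BooleanAlgebra B'] (s : Set B')
    (hbot : ⊥ ∈ s) (htop : ⊤ ∈ s)
    (hsup : ∀ ⦃x y : B'⦄, x ∈ s → y ∈ s → x ⊔ y ∈ s)
    (hinf : ∀ ⦃x y : B'⦄, x ∈ s → y ∈ s → x ⊓ y ∈ s)
    (hcompl : ∀ ⦃x : B'⦄, x ∈ s → xᶜ ∈ s) :
    letI : Lattice s := Subtype.lattice hsup hinf
    letI : BoundedOrder s := Subtype.boundedOrder hbot htop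
    ∀ f : BoundedLatticeHom s Bool,
      ∃ F : BoundedLatticeHom B' Bool, ∀ x : s, F (x : B') = f x := by
  letI : Lattice s := Subtype.lattice hsup hinf
  letI : BoundedOrder s := Subtype.boundedOrder hbot htop
  intro f
  -- the "true set" generates a filter
  set T : Set B' := {x | ∃ a : B', ∃ h : a ∈ s, f ⟨a, h⟩ = true ∧ a ≤ x} with hT
  have hTfilter : Order.IsPFilter T := by
    refine Order.IsPFilter.of_def ⟨⊤, ⊤, htop, ?_, le_rfl⟩ ?_ ?_
    · have : f ⊤ = ⊤ := map_top f
      exact this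
    · rintro x ⟨a, ha, hfa, hax⟩ y ⟨b, hb, hfb, hby⟩
      refine ⟨a ⊓ b, ⟨a ⊓ b, hinf ha hb, ?_, le_rfl⟩,
        le_trans inf_le_left hax, le_trans inf_le_right hby⟩
      have : (⟨a ⊓ b, hinf ha hb⟩ : s) = (⟨a, ha⟩ : s) ⊓ ⟨b, hb⟩ := rfl
      rw [this, map_inf, hfa, hfb]; rfl
    · rintro x y hxy ⟨a, ha, hfa, hax⟩
      exact ⟨a, ha, hfa, hax.trans hxy⟩
  -- the "false set" generates an ideal
  set I0 : Set B' := {x | ∃ a : B', ∃ h : a ∈ s, f ⟨a, h⟩ = false ∧ x ≤ a} with hI0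
  have hI0ideal : Order.IsIdeal I0 := by
    refine ⟨?_, ⟨⊥, ⊥, hbot, ?_, le_rfl⟩, ?_⟩
    · rintro x y hyx ⟨a, ha, hfa, hxa⟩
      exact ⟨a, ha, hfa, hyx.trans hxa⟩
    · have : f ⊥ = ⊥ := map_bot f
      exact this
    · rintro x ⟨a, ha, hfa, hxa⟩ y ⟨b, hb, hfb, hyb⟩
      refine ⟨a ⊔ b, ⟨a ⊔ b, hsup ha hb, ?_, le_rfl⟩,
        hxa.trans le_sup_left, hyb.trans le_sup_right⟩
      have : (⟨a ⊔ b, hsup ha hb⟩ : s) = (⟨a, ha⟩ : s) ⊔ ⟨b, hb⟩ := rfl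
      rw [this, map_sup, hfa, hfb]; rfl
  have hdisj : Disjoint (hTfilter.toPFilter : Set B') (hI0ideal.toIdeal : Set B') := by
    rw [Set.disjoint_left]
    rintro x ⟨a, ha, hfa, hax⟩ ⟨b, hb, hfb, hxb⟩
    have hab : a ≤ b := hax.trans hxb
    have : (⟨a, ha⟩ : s) ⊔ ⟨b, hb⟩ = ⟨b, hb⟩ := Subtype.ext (sup_eq_right.mpr hab)
    have h2 := congrArg f this
    rw [map_sup, hfa, hfb] at h2
    exact Bool.noConfusion h2
  obtain ⟨J, hJprime, hIJ, hJdisj⟩ :=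
    DistribLattice.prime_ideal_of_disjoint_filter_ideal hdisj
  -- the extension: x ↦ decide (x ∉ J)
  have hbotJ : (⊥ : B') ∈ J := J.lower bot_le J.nonempty.choose_spec
  have htopJ : (⊤ : B') ∉ J :=
    Set.disjoint_left.mp hJdisj ⟨⊤, htop, map_top f, le_rfl⟩
  have hsupJ : ∀ x y : B', x ⊔ y ∈ J ↔ x ∈ J ∧ y ∈ J := fun x y =>
    ⟨fun h => ⟨J.lower le_sup_left h, J.lower le_sup_right h⟩,
     fun ⟨hx, hy⟩ => Order.Ideal.sup_mem hx hy⟩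
  have hinfJ : ∀ x y : B', x ⊓ y ∈ J ↔ x ∈ J ∨ y ∈ J := fun x y =>
    ⟨hJprime.mem_or_mem,
     fun h => h.elim (fun hx => J.lower inf_le_left hx) (fun hy => J.lower inf_le_right hy)⟩
  refine ⟨{ toFun := fun x => decide (x ∉ J)
            map_sup' := ?_, map_inf' := ?_, map_top' := ?_, map_bot' := ?_ }, ?_⟩
  · intro x y
    simp only [hsupJ, not_and_or]
    by_cases hx : x ∈ J <;> by_cases hy : y ∈ J <;> simp [hx, hy]
  · intro x y
    simp only [hinfJ, not_or]
    by_cases hx : x ∈ J <;> by_cases hy : y ∈ J <;> simp [hx, hy]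
  · simp [htopJ]
  · simp [hbotJ]
  · rintro ⟨x, hx⟩
    cases hfx : f ⟨x, hx⟩ with
    | true =>
      have hxT : x ∈ hTfilter.toPFilter := ⟨x, hx, hfx, le_rfl⟩
      have : x ∉ J := Set.disjoint_left.mp hJdisj hxT
      simp [this]
    | false =>
      have hxI : x ∈ hI0ideal.toIdeal := ⟨x, hx, hfx, le_rfl⟩
      have : x ∈ J := hIJ hxI
      simp [this]
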